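/- arXiv:2505.09448 — 8 statements merged into one kernel-verified Lean document; each statement's English description precedes it below -/
import Mathlib

section
/- Let R be a commutative ring with identity and M an R-module in which every non-zero submodule contains a minimal submodule. A non-zero proper submodule N of M is an isolated vertex of the graph SSI(M) if and only if N is both a minimal submodule and a maximal submodule of M. -/
open Submodule

/-- A non-zero submodule `S` of `M` is *second* if for every `r : R`,
either `r S = 0` or `r S = S`. -/
def IsSecondSubmodule (R : Type*) {M : Type*} [CommRing R] [AddCommGroup M] [Module R M]
    (S : Submodule R M) : Prop :=
  S ≠ ⊥ ∧ ∀ r : R, S.map (r • (LinearMap.id : M →ₗ[R] M)) = ⊥ ∨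
    S.map (r • (LinearMap.id : M →ₗ[R] M)) = S

/-- A proper submodule `P` of `M` is *prime* if whenever `r • m ∈ P`,
either `m ∈ P` or `r M ⊆ P`. -/
def IsPrimeSubmodule (R : Type*) {M : Type*} [CommRing R] [AddCommGroup M] [Module R M]
    (P : Submodule R M) : Prop :=
  P ≠ ⊤ ∧ ∀ (r : R) (m : M), r • m ∈ P → m ∈ P ∨ ∀ x : M, r • x ∈ P

/-- The second submodule intersection graph `SSI(M)`: vertices are the non-zero proper
submodules of `M`, and two distinct vertices are adjacent iff their intersection is a
second submodule of `M`. -/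
def SSI (R M : Type*) [CommRing R] [AddCommGroup M] [Module R M] :
    SimpleGraph {N : Submodule R M // N ≠ ⊥ ∧ N ≠ ⊤} where
  Adj N K := N ≠ K ∧ IsSecondSubmodule R (N.1 ⊓ K.1)
  symm := ⟨fun N K ⟨h1, h2⟩ => ⟨h1.symm, by rwa [inf_comm]⟩⟩
  loopless := ⟨fun N h => h.1 rfl⟩

/-- The prime submodule sum graph `PSS(M)`: vertices are the non-zero proper
submodules of `M`, and two distinct vertices are adjacent iff their sum is a
prime submodule of `M`. -/
def PSS (R M : Type*) [CommRing R] [AddCommGroup M] [Module R M] :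
    SimpleGraph {N : Submodule R M // N ≠ ⊥ ∧ N ≠ ⊤} where
  Adj N K := N ≠ K ∧ IsPrimeSubmodule R (N.1 ⊔ K.1)
  symm := ⟨fun N K ⟨h1, h2⟩ => ⟨h1.symm, by rwa [sup_comm]⟩⟩
  loopless := ⟨fun N h => h.1 rfl⟩

/-- The prime ideal sum graph `PIS(R)`: vertices are the non-zero proper ideals of `R`,
and two distinct vertices are adjacent iff their sum is a prime ideal of `R`. -/
def PIS (R : Type*) [CommRing R] :
    SimpleGraph {I : Ideal R // I ≠ ⊥ ∧ I ≠ ⊤} where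
  Adj I J := I ≠ J ∧ (I.1 + J.1).IsPrime
  symm := ⟨fun I J ⟨h1, h2⟩ => ⟨h1.symm, by rwa [add_comm]⟩⟩
  loopless := ⟨fun I h => h.1 rfl⟩

/-!
A second submodule properly contained in a vertex `K` is, as a vertex, adjacent to `K`, and
minimal submodules are second. So an isolated vertex `N` contains no minimal submodule other
than itself, hence is minimal by the hypothesis, and no proper submodule properly contains it.
Conversely, if `N` is minimal then `N ∩ K ≠ 0` forces `N ≤ K`, and maximality forces `N = K`.
-/

lemma IsAtom.isSecondSubmodule {R M : Type*} [CommRing R] [AddCommGroup M] [Module R M]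
    {S : Submodule R M} (hS : IsAtom S) : IsSecondSubmodule R S := by
  refine ⟨hS.1, fun r => hS.le_iff.mp ?_⟩
  rintro _ ⟨x, hx, rfl⟩
  exact S.smul_mem r hx

namespace SSI

variable {R M : Type*} [CommRing R] [AddCommGroup M] [Module R M]

lemma adj_of_lt {N K : {N : Submodule R M // N ≠ ⊥ ∧ N ≠ ⊤}} (hNK : N.1 < K.1)
    (hN : IsSecondSubmodule R N.1) : (SSI R M).Adj N K :=
  ⟨fun h => hNK.ne (congrArg Subtype.val h), by rwa [inf_eq_left.mpr hNK.le]⟩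

lemma not_adj_of_isAtom_of_isCoatom {N : {N : Submodule R M // N ≠ ⊥ ∧ N ≠ ⊤}}
    (hA : IsAtom N.1) (hC : IsCoatom N.1) (K : {N : Submodule R M // N ≠ ⊥ ∧ N ≠ ⊤}) :
    ¬ (SSI R M).Adj N K := by
  rintro ⟨hne, hsec⟩
  have hNK : N.1 ≤ K.1 := inf_eq_left.mp ((hA.le_iff.mp inf_le_left).resolve_left hsec.1)
  exact hne (Subtype.ext ((hC.le_iff.mp hNK).resolve_left K.2.2).symm)

end SSI

/-- **Theorem 2.5.** A non-zero proper submodule `N` is an isolated vertex of `SSI(M)`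
iff `N` is both a minimal and a maximal submodule of `M`. -/
theorem ssi_isolated_vertex_iff
    (R M : Type*) [CommRing R] [AddCommGroup M] [Module R M]
    (hmin : ∀ N : Submodule R M, N ≠ ⊥ → ∃ S : Submodule R M, IsAtom S ∧ S ≤ N)
    (N : {N : Submodule R M // N ≠ ⊥ ∧ N ≠ ⊤}) :
    (∀ w : {N : Submodule R M // N ≠ ⊥ ∧ N ≠ ⊤}, ¬ (SSI R M).Adj N w) ↔
      (IsAtom N.1 ∧ IsCoatom N.1) := by
  refine ⟨fun hiso => ?_, fun ⟨hA, hC⟩ => SSI.not_adj_of_isAtom_of_isCoatom hA hC⟩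
  have hA : IsAtom N.1 := by
    obtain ⟨S, hS, hSN⟩ := hmin N.1 N.2.1
    rcases hSN.lt_or_eq with hlt | rfl
    · let S' : {N : Submodule R M // N ≠ ⊥ ∧ N ≠ ⊤} := ⟨S, hS.1, (hlt.trans_le le_top).ne⟩
      exact absurd (SSI.adj_of_lt (N := S') hlt hS.isSecondSubmodule).symm (hiso S')
    · exact hS
  refine ⟨hA, N.2.2, fun K hNK => by_contra fun hK => ?_⟩
  exact hiso ⟨K, (bot_le.trans_lt hNK).ne', hK⟩ (SSI.adj_of_lt hNK hA.isSecondSubmodule)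
end

section
/- Let R be a commutative ring with identity and M a comultiplication R-module. Let N and K be two distinct non-zero proper submodules of M such that Ann_R(N ∩ K) = Ann_R(N) + Ann_R(K) and such that Ann_R(N) and Ann_R(K) are non-zero proper ideals of R. Then N and K are adjacent in SSI(M) (i.e., N ∩ K is a second submodule of M) if and only if Ann_R(N) and Ann_R(K) are adjacent in PIS(R) (i.e., Ann_R(N) + Ann_R(K) is a prime ideal of R). -/
open Submodule

/-!
In a comultiplication module every submodule `S` equals `(0 :_M Ann S)`, so a submodule is
determined by its annihilator. Since `Ann(r S) = (Ann S : r)`, this makes `S` second exactly when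
`Ann S` is prime; the hypothesis `Ann(N ∩ K) = Ann N + Ann K` then turns the second-ness of
`N ∩ K` into primality of `Ann N + Ann K`.
-/

def IsComultiplicationModule (R M : Type*) [CommRing R] [AddCommGroup M] [Module R M] : Prop :=
  ∀ N : Submodule R M, ∃ I : Ideal R, N = torsionBySet R M (I : Set R)

section

variable {R M : Type*} [CommRing R] [AddCommGroup M] [Module R M]

lemma mem_annihilator_map_smul_id {a r : R} {S : Submodule R M} :
    a ∈ (S.map (r • LinearMap.id)).annihilator ↔ a * r ∈ S.annihilator := by
  simp only [mem_annihilator, mem_map, LinearMap.smul_apply, LinearMap.id_apply,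
    forall_exists_index, and_imp, forall_apply_eq_imp_iff₂, mul_smul]

lemma map_smul_id_eq_bot_iff {r : R} {S : Submodule R M} :
    S.map (r • LinearMap.id) = ⊥ ↔ r ∈ S.annihilator := by
  rw [← annihilator_eq_top_iff, Ideal.eq_top_iff_one, mem_annihilator_map_smul_id, one_mul]

theorem IsSecondSubmodule.annihilator_isPrime {S : Submodule R M} (hS : IsSecondSubmodule R S) :
    S.annihilator.IsPrime := by
  refine Ideal.isPrime_iff.2 ⟨fun h ↦ hS.1 (annihilator_eq_top_iff.1 h), fun {a b} hab ↦ ?_⟩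
  refine (hS.2 a).imp map_smul_id_eq_bot_iff.1 fun haS ↦ ?_
  -- `a S = S`, so `b` kills `S` as soon as `b a` does.
  rw [← haS, mem_annihilator_map_smul_id, mul_comm]
  exact hab

theorem IsComultiplicationModule.eq_torsionBySet_annihilator
    (hM : IsComultiplicationModule R M) (S : Submodule R M) :
    S = torsionBySet R M (S.annihilator : Set R) := by
  obtain ⟨I, rfl⟩ := hM S
  exact ((torsion_gc R M).u_l_u_eq_u (OrderDual.toDual I)).symm

theorem IsComultiplicationModule.annihilator_injective (hM : IsComultiplicationModule R M) :
    Function.Injective (annihilator : Submodule R M → Ideal R) := fun A B h ↦ by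
  rw [hM.eq_torsionBySet_annihilator A, hM.eq_torsionBySet_annihilator B, h]

theorem IsComultiplicationModule.isSecondSubmodule_of_annihilator_isPrime
    (hM : IsComultiplicationModule R M) {S : Submodule R M} (hS : S.annihilator.IsPrime) :
    IsSecondSubmodule R S := by
  refine ⟨fun h ↦ hS.ne_top (annihilator_eq_top_iff.2 h), fun r ↦ ?_⟩
  by_cases hr : r ∈ S.annihilator
  · exact .inl (map_smul_id_eq_bot_iff.2 hr)
  refine .inr (hM.annihilator_injective (Ideal.ext fun a ↦ ?_))
  rw [mem_annihilator_map_smul_id]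
  exact ⟨fun h ↦ (hS.mem_or_mem h).resolve_right hr, fun h ↦ Ideal.mul_mem_right r _ h⟩

theorem IsComultiplicationModule.isSecondSubmodule_iff_annihilator_isPrime
    (hM : IsComultiplicationModule R M) {S : Submodule R M} :
    IsSecondSubmodule R S ↔ S.annihilator.IsPrime :=
  ⟨IsSecondSubmodule.annihilator_isPrime, hM.isSecondSubmodule_of_annihilator_isPrime⟩

end

theorem ssi_adj_iff_pis_adj_of_comultiplication_general
    (R M : Type*) [CommRing R] [AddCommGroup M] [Module R M]
    (hcomul : ∀ N : Submodule R M, ∃ I : Ideal R, N = Submodule.torsionBySet R M (I : Set R))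
    (N K : Submodule R M)
    (hann : (N ⊓ K).annihilator = N.annihilator + K.annihilator) :
    IsSecondSubmodule R (N ⊓ K) ↔ (N.annihilator + K.annihilator).IsPrime := by
  rw [← hann]
  exact IsComultiplicationModule.isSecondSubmodule_iff_annihilator_isPrime hcomul

/-- **Proposition 2.7.** For a comultiplication module `M` and distinct non-zero proper
submodules `N`, `K` with `Ann(N ∩ K) = Ann(N) + Ann(K)` and `Ann(N)`, `Ann(K)` non-zero
proper ideals, `N ∩ K` is second iff `Ann(N) + Ann(K)` is a prime ideal. -/
theorem ssi_adj_iff_pis_adj_of_comultiplication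
    (R M : Type*) [CommRing R] [AddCommGroup M] [Module R M]
    (hcomul : ∀ N : Submodule R M, ∃ I : Ideal R, N = Submodule.torsionBySet R M (I : Set R))
    (N K : Submodule R M) (hNK : N ≠ K)
    (hN : N ≠ ⊥) (hN' : N ≠ ⊤) (hK : K ≠ ⊥) (hK' : K ≠ ⊤)
    (hann : (N ⊓ K).annihilator = N.annihilator + K.annihilator)
    (hAN : N.annihilator ≠ ⊥) (hAN' : N.annihilator ≠ ⊤)
    (hAK : K.annihilator ≠ ⊥) (hAK' : K.annihilator ≠ ⊤) :
    IsSecondSubmodule R (N ⊓ K) ↔ (N.annihilator + K.annihilator).IsPrime :=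
  ssi_adj_iff_pis_adj_of_comultiplication_general R M hcomul N K hann
end

section
/- Let R be a commutative ring with identity and M an R-module in which every non-zero submodule contains a minimal submodule. If the graph SSI(M) is connected, then the intersection of any two maximal submodules of M is non-zero. -/
open Submodule

/-! If two maximal submodules `K₁`, `K₂` meet in `0`, they are complements in the modular
lattice of submodules, so each is also minimal. Every other non-zero proper submodule either
contains `K₁`, hence equals it, or meets it in `0` and is then minimal as a complement of a
maximal submodule. So all vertices of `SSI(M)` are minimal; two distinct ones meet in `0`,
which is not second, and `SSI(M)` has no edges although `K₁ ≠ K₂` are two of its vertices. -/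

section PartialOrder

variable {α : Type*} [PartialOrder α] [BoundedOrder α]

theorem IsCoatom.ne_bot_of_ne_bot_of_ne_top {K x : α} (hK : IsCoatom K) (hx : x ≠ ⊥)
    (hx' : x ≠ ⊤) : K ≠ ⊥ := by
  rintro rfl
  exact hx' (hK.lt_iff.1 (bot_lt_iff_ne_bot.2 hx))

end PartialOrder

section ModularLattice

variable {α : Type*} [Lattice α] [BoundedOrder α] [IsModularLattice α]

theorem IsCoatom.isAtom_of_disjoint {K N : α} (hK : IsCoatom K) (hN : N ≠ ⊥)
    (hNK : Disjoint N K) : IsAtom N := by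
  have hNK' : ¬ N ≤ K := fun hle => hN (hNK.eq_bot_of_le hle)
  exact (IsCompl.of_eq hNK.eq_bot (hK.not_le_iff_codisjoint.1 hNK').symm.eq_top
    |>.isAtom_iff_isCoatom).2 hK

theorem isAtom_of_disjoint_coatoms {K₁ K₂ x : α} (hK₁ : IsCoatom K₁) (hK₂ : IsCoatom K₂)
    (hK : Disjoint K₁ K₂) (hx : x ≠ ⊥) (hx' : x ≠ ⊤) : IsAtom x := by
  have hK₁_atom : IsAtom K₁ :=
    hK₂.isAtom_of_disjoint (hK₁.ne_bot_of_ne_bot_of_ne_top hx hx') hK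
  by_cases hle : K₁ ≤ x
  · rwa [(hK₁.le_iff.1 hle).resolve_left hx']
  · exact hK₁.isAtom_of_disjoint hx (hK₁_atom.not_le_iff_disjoint.1 hle).symm

end ModularLattice

theorem ssi_eq_bot_of_forall_isAtom {R M : Type*} [CommRing R] [AddCommGroup M] [Module R M]
    (h : ∀ N : Submodule R M, N ≠ ⊥ → N ≠ ⊤ → IsAtom N) : SSI R M = ⊥ :=
  SimpleGraph.eq_bot_iff_forall_not_adj.2 fun N K ⟨hNK, hsec⟩ =>
    hsec.1 ((h _ N.2.1 N.2.2).disjoint_of_ne (h _ K.2.1 K.2.2)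
      (Subtype.coe_injective.ne hNK)).eq_bot

theorem ssi_connected_imp_inf_coatoms_ne_bot_general
    (R M : Type*) [CommRing R] [AddCommGroup M] [Module R M]
    (hconn : (SSI R M).Connected) :
    ∀ K₁ K₂ : Submodule R M, IsCoatom K₁ → IsCoatom K₂ → K₁ ⊓ K₂ ≠ ⊥ := by
  intro K₁ K₂ hK₁ hK₂ hinf
  obtain ⟨⟨N, hN, hN'⟩⟩ := hconn.nonempty
  have hK₁_ne_bot := hK₁.ne_bot_of_ne_bot_of_ne_top hN hN'
  have hK₂_ne_bot := hK₂.ne_bot_of_ne_bot_of_ne_top hN hN'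
  have hK₁₂ : K₁ ≠ K₂ := by
    rintro rfl
    exact hK₁_ne_bot (inf_idem K₁ ▸ hinf)
  rw [ssi_eq_bot_of_forall_isAtom fun _ =>
    isAtom_of_disjoint_coatoms hK₁ hK₂ (disjoint_iff.2 hinf)] at hconn
  have hK₁₂_eq := SimpleGraph.reachable_bot.1
    (hconn.preconnected ⟨K₁, hK₁_ne_bot, hK₁.ne_top⟩ ⟨K₂, hK₂_ne_bot, hK₂.ne_top⟩)
  exact hK₁₂ (congrArg Subtype.val hK₁₂_eq)

/-- **Corollary 2.998.** If `SSI(M)` is connected, then the intersection of any two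
maximal submodules of `M` is non-zero. -/
theorem ssi_connected_imp_inf_coatoms_ne_bot
    (R M : Type*) [CommRing R] [AddCommGroup M] [Module R M]
    (hmin : ∀ N : Submodule R M, N ≠ ⊥ → ∃ S : Submodule R M, IsAtom S ∧ S ≤ N)
    (hconn : (SSI R M).Connected) :
    ∀ K₁ K₂ : Submodule R M, IsCoatom K₁ → IsCoatom K₂ → K₁ ⊓ K₂ ≠ ⊥ :=
  ssi_connected_imp_inf_coatoms_ne_bot_general R M hconn
end

section
/- Let R be a commutative ring with identity and M an R-module that has two non-comparable non-zero proper submodules N₁ and N₂ (neither contains the other) which are adjacent in SSI(M). Then the girth of SSI(M) equals 3. -/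
open Submodule

/-!
Being second, `N₁ ⊓ N₂` is non-zero, hence a vertex, and by non-comparability it lies strictly
below both `N₁` and `N₂`. Its intersection with each of them is itself, hence second, so it is adjacent to
both and closes a triangle with the edge `N₁ — N₂`.
-/

theorem SimpleGraph.egirth_eq_three_of_adj {α : Type*} {G : SimpleGraph α} {a b c : α}
    (hab : G.Adj a b) (hbc : G.Adj b c) (hca : G.Adj c a) : G.egirth = 3 := by
  refine le_antisymm ?_ G.three_le_egirth
  have hcycle : (Walk.cons hab (.cons hbc (.cons hca .nil))).IsCycle := by
    simp [Walk.cons_isCycle_iff, hab.ne, hbc.ne, hca.ne, hab.ne.symm, hca.ne.symm]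
  simpa using G.egirth_le_length hcycle

theorem ssi_adj_of_lt {R M : Type*} [CommRing R] [AddCommGroup M] [Module R M]
    {N K : {N : Submodule R M // N ≠ ⊥ ∧ N ≠ ⊤}} (hlt : N.1 < K.1)
    (hN : IsSecondSubmodule R N.1) : (SSI R M).Adj N K :=
  ⟨fun h => hlt.ne (congrArg Subtype.val h), by rwa [inf_eq_left.mpr hlt.le]⟩

/-- **Theorem 2.9.** If `M` has two non-comparable submodules adjacent in `SSI(M)`,
then the girth of `SSI(M)` equals `3`. -/
theorem ssi_girth_eq_three
    (R M : Type*) [CommRing R] [AddCommGroup M] [Module R M]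
    (N₁ N₂ : {N : Submodule R M // N ≠ ⊥ ∧ N ≠ ⊤})
    (h₁ : ¬ N₁.1 ≤ N₂.1) (h₂ : ¬ N₂.1 ≤ N₁.1)
    (hadj : (SSI R M).Adj N₁ N₂) :
    (SSI R M).egirth = 3 := by
  have hsec : IsSecondSubmodule R (N₁.1 ⊓ N₂.1) := hadj.2
  let S : {N : Submodule R M // N ≠ ⊥ ∧ N ≠ ⊤} :=
    ⟨N₁.1 ⊓ N₂.1, hsec.1, ne_top_of_le_ne_top N₁.2.2 inf_le_left⟩
  have hS₁ : (SSI R M).Adj S N₁ := ssi_adj_of_lt (inf_lt_left.mpr h₁) hsec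
  have hS₂ : (SSI R M).Adj S N₂ := ssi_adj_of_lt (inf_lt_right.mpr h₂) hsec
  exact SimpleGraph.egirth_eq_three_of_adj hadj hS₂.symm hS₁
end

section
/- Let R be a commutative ring with identity and M an R-module such that the girth of the graph SSI(M) is a finite number n. Then M has at least ⌊n/2⌋ distinct second submodules. -/
open Submodule

/-! Along a shortest cycle of `SSI(M)`, the intersections of the alternate edges
`v₀v₁, v₂v₃, …` are ⌊n/2⌋ second submodules. They are distinct: when `n ≥ 4` the graph is
triangle-free, and in a triangle-free `SSI(M)` the ends of every edge are comparable (otherwise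
`N ⊓ K` would be a third vertex adjacent to both). So if two vertex-disjoint edges `AB`, `CD` had
the same intersection, the smaller of `A`, `B` would lie below `C ⊓ D` and form a triangle with
`C` and `D`. -/

namespace SimpleGraph

variable {V : Type*} {G : SimpleGraph V}

lemma cliqueFree_three_of_three_lt_egirth (h : 3 < G.egirth) : G.CliqueFree 3 := by
  by_contra hG
  have hle : G.egirth ≤ 3 :=
    ((not_cliqueFree_iff_top_isContained 3).mp hG).egirth_le.trans_eq (egirth_top (by simp))
  exact h.not_ge hle

lemma Walk.IsCycle.getVert_ne_getVert {u : V} {p : G.Walk u u} (hp : p.IsCycle) {i j : ℕ}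
    (hi : i < p.length) (hj : j < p.length) (hij : i ≠ j) : p.getVert i ≠ p.getVert j :=
  fun h ↦ hij (hp.getVert_injOn' (by simp only [Set.mem_ofPred_eq]; omega)
    (by simp only [Set.mem_ofPred_eq]; omega) h)

end SimpleGraph

open SimpleGraph

namespace SSI

variable {R M : Type*} [CommRing R] [AddCommGroup M] [Module R M]
  {x y a b c d : {N : Submodule R M // N ≠ ⊥ ∧ N ≠ ⊤}}

lemma adj_of_le (hxy : x ≠ y) (hle : x.1 ≤ y.1) (hx : IsSecondSubmodule R x.1) :
    (SSI R M).Adj x y :=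
  ⟨hxy, by rwa [inf_eq_left.mpr hle]⟩

lemma is3Clique_of_le_inf (hab : (SSI R M).Adj a b) (hxa : x ≠ a) (hxb : x ≠ b)
    (hx : IsSecondSubmodule R x.1) (hle : x.1 ≤ a.1 ⊓ b.1) : (SSI R M).IsNClique 3 {x, a, b} :=
  is3Clique_triple_iff.mpr
    ⟨adj_of_le hxa (hle.trans inf_le_left) hx, adj_of_le hxb (hle.trans inf_le_right) hx, hab⟩

lemma le_or_le_of_adj (hG : (SSI R M).CliqueFree 3) (hxy : (SSI R M).Adj x y) :
    x.1 ≤ y.1 ∨ y.1 ≤ x.1 := by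
  by_contra! hinc
  let s : {N : Submodule R M // N ≠ ⊥ ∧ N ≠ ⊤} :=
    ⟨x.1 ⊓ y.1, hxy.2.1, ne_top_of_le_ne_top x.2.2 inf_le_left⟩
  have hsx : s ≠ x := fun h ↦ hinc.1 (inf_eq_left.mp (congrArg Subtype.val h))
  have hsy : s ≠ y := fun h ↦ hinc.2 (inf_eq_right.mp (congrArg Subtype.val h))
  exact (is3Clique_of_le_inf hxy hsx hsy hxy.2 le_rfl).not_cliqueFree hG

lemma inf_ne_inf_of_adj (hG : (SSI R M).CliqueFree 3) (hab : (SSI R M).Adj a b)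
    (hcd : (SSI R M).Adj c d) (hac : a ≠ c) (had : a ≠ d) (hbc : b ≠ c) (hbd : b ≠ d) :
    a.1 ⊓ b.1 ≠ c.1 ⊓ d.1 := by
  intro h
  rcases le_or_le_of_adj hG hab with hle | hle
  · have ha : a.1 ⊓ b.1 = a.1 := inf_eq_left.mpr hle
    exact (is3Clique_of_le_inf hcd hac had (ha ▸ hab.2) (ha ▸ h.le)).not_cliqueFree hG
  · have hb : a.1 ⊓ b.1 = b.1 := inf_eq_right.mpr hle
    exact (is3Clique_of_le_inf hcd hbc hbd (hb ▸ hab.2) (hb ▸ h.le)).not_cliqueFree hG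

lemma inf_getVert_injOn {u} {w : (SSI R M).Walk u u} (hw : w.IsCycle)
    (hmin : (SSI R M).egirth = w.length) :
    Set.InjOn (fun i ↦ (w.getVert (2 * i)).1 ⊓ (w.getVert (2 * i + 1)).1)
      {i | i < w.length / 2} := by
  intro i hi j hj h
  by_contra hij
  simp only [Set.mem_ofPred_eq] at hi hj
  have hG : (SSI R M).CliqueFree 3 :=
    cliqueFree_three_of_three_lt_egirth (by rw [hmin]; exact_mod_cast (by omega : 3 < w.length))
  have hne : ∀ k l, k < w.length → l < w.length → k ≠ l → w.getVert k ≠ w.getVert l :=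
    fun _ _ ↦ hw.getVert_ne_getVert
  exact inf_ne_inf_of_adj hG (w.adj_getVert_succ (by omega)) (w.adj_getVert_succ (by omega))
    (hne _ _ (by omega) (by omega) (by omega)) (hne _ _ (by omega) (by omega) (by omega))
    (hne _ _ (by omega) (by omega) (by omega)) (hne _ _ (by omega) (by omega) (by omega)) h

end SSI

/-- **Theorem 2.11.** If the girth of `SSI(M)` is a finite number `n`, then `M` has at
least `⌊n/2⌋` distinct second submodules. -/
theorem ssi_girth_imp_many_second_submodules
    (R M : Type*) [CommRing R] [AddCommGroup M] [Module R M]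
    (n : ℕ) (hg : (SSI R M).egirth = n) :
    (↑(n / 2) : ℕ∞) ≤ {S : Submodule R M | IsSecondSubmodule R S}.encard := by
  have hcyc : ¬ (SSI R M).IsAcyclic := fun h ↦ ENat.natCast_ne_top n (hg ▸ h.egirth_eq_top)
  obtain ⟨u, w, hw, hmin⟩ := exists_egirth_eq_length.mpr hcyc
  have hn : w.length = n := by exact_mod_cast hmin.symm.trans hg
  have hmaps : Set.MapsTo (fun i ↦ (w.getVert (2 * i)).1 ⊓ (w.getVert (2 * i + 1)).1)
      {i | i < n / 2} {S | IsSecondSubmodule R S} :=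
    fun i hi ↦ (w.adj_getVert_succ (by simp only [Set.mem_ofPred_eq] at hi; omega)).2
  calc (↑(n / 2) : ℕ∞) = ({i | i < n / 2} : Set ℕ).encard := (Set.Nat.encard_range _).symm
    _ ≤ _ := Set.encard_le_encard_of_injOn hmaps (hn ▸ SSI.inf_getVert_injOn hw hmin)
end

section
/- Let R be a commutative ring with identity and M an R-module in which every proper submodule is contained in a maximal submodule. A non-zero proper submodule N of M is an isolated vertex of the graph PSS(M) if and only if N is both a maximal submodule and a minimal submodule of M. -/
open Submodule

lemma IsCoatom.isPrimeSubmodule {R M : Type*} [CommRing R] [AddCommGroup M] [Module R M]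
    {K : Submodule R M} (hK : IsCoatom K) : IsPrimeSubmodule R K := by
  refine ⟨hK.1, fun r m hrm => or_iff_not_imp_left.mpr fun hm x => ?_⟩
  have hx : x ∈ K ⊔ span R {m} := by
    rw [hK.2 _ (left_lt_sup.mpr fun h => hm (h (mem_span_singleton_self m)))]
    exact mem_top
  obtain ⟨k, hk, y, hy, rfl⟩ := mem_sup.mp hx
  obtain ⟨s, rfl⟩ := mem_span_singleton.mp hy
  rw [smul_add, smul_comm]
  exact K.add_mem (K.smul_mem r hk) (K.smul_mem s hrm)

namespace PSS

variable {R M : Type*} [CommRing R] [AddCommGroup M] [Module R M]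

lemma adj_of_lt {N K : {N : Submodule R M // N ≠ ⊥ ∧ N ≠ ⊤}} (hNK : N.1 < K.1)
    (hK : IsPrimeSubmodule R K.1) : (PSS R M).Adj N K :=
  ⟨fun h => hNK.ne (congrArg Subtype.val h), by rwa [sup_eq_right.mpr hNK.le]⟩

lemma isCoatom_of_forall_not_adj
    (hmax : ∀ N : Submodule R M, N ≠ ⊤ → ∃ K : Submodule R M, IsCoatom K ∧ N ≤ K)
    {N : {N : Submodule R M // N ≠ ⊥ ∧ N ≠ ⊤}} (hN : ∀ w, ¬ (PSS R M).Adj N w) :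
    IsCoatom N.1 := by
  obtain ⟨K, hK, hNK⟩ := hmax N.1 N.2.2
  obtain rfl | hlt := hNK.eq_or_lt
  · exact hK
  · have hKbot : K ≠ ⊥ := ne_bot_of_le_ne_bot N.2.1 hNK
    exact absurd (adj_of_lt (K := ⟨K, hKbot, hK.1⟩) hlt hK.isPrimeSubmodule) (hN _)

lemma isAtom_of_forall_not_adj {N : {N : Submodule R M // N ≠ ⊥ ∧ N ≠ ⊤}}
    (hco : IsCoatom N.1) (hN : ∀ w, ¬ (PSS R M).Adj N w) : IsAtom N.1 := by
  refine ⟨N.2.1, fun L hLN => by_contra fun hL => ?_⟩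
  have hLtop : L ≠ ⊤ := fun h => N.2.2 (top_unique (h ▸ hLN.le))
  exact hN ⟨L, hL, hLtop⟩ ((adj_of_lt (N := ⟨L, hL, hLtop⟩) hLN hco.isPrimeSubmodule).symm)

lemma not_adj_of_isCoatom_of_isAtom {N : {N : Submodule R M // N ≠ ⊥ ∧ N ≠ ⊤}}
    (hco : IsCoatom N.1) (hat : IsAtom N.1) (w : {N : Submodule R M // N ≠ ⊥ ∧ N ≠ ⊤}) :
    ¬ (PSS R M).Adj N w := by
  rintro ⟨hne, hprime⟩
  -- `N ⊔ w` is proper, so maximality of `N` forces `w ≤ N`, and then minimality forces `w = N`.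
  have hwN : w.1 ≤ N.1 :=
    sup_eq_left.mp ((le_sup_left.eq_or_lt.resolve_right fun h => hprime.1 (hco.2 _ h)).symm)
  exact hne (Subtype.ext ((hat.le_iff.mp hwN).resolve_left w.2.1).symm)

end PSS

/-- **Theorem 3.6.** A non-zero proper submodule `N` is an isolated vertex of `PSS(M)`
iff `N` is both a maximal and a minimal submodule of `M`. -/
theorem pss_isolated_vertex_iff
    (R M : Type*) [CommRing R] [AddCommGroup M] [Module R M]
    (hmax : ∀ N : Submodule R M, N ≠ ⊤ → ∃ K : Submodule R M, IsCoatom K ∧ N ≤ K)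
    (N : {N : Submodule R M // N ≠ ⊥ ∧ N ≠ ⊤}) :
    (∀ w : {N : Submodule R M // N ≠ ⊥ ∧ N ≠ ⊤}, ¬ (PSS R M).Adj N w) ↔
      (IsCoatom N.1 ∧ IsAtom N.1) := by
  refine ⟨fun hN => ?_, fun ⟨hco, hat⟩ => PSS.not_adj_of_isCoatom_of_isAtom hco hat⟩
  have hco := PSS.isCoatom_of_forall_not_adj hmax hN
  exact ⟨hco, PSS.isAtom_of_forall_not_adj hco hN⟩
end

section
/- Let R be a commutative ring with identity and M an R-module in which every proper submodule is contained in a maximal submodule. If the graph PSS(M) is connected, then the sum of any two minimal submodules of M is a proper submodule of M (i.e., is not equal to M). -/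
open Submodule

/-!
If two distinct minimal submodules `K₁, K₂` span `M`, they are complements in the modular
lattice of submodules, so `K₁` is maximal as well as minimal. A neighbour `N` of `K₁` in
`PSS(M)` would give a proper submodule `K₁ + N ⊇ K₁`, forcing `K₁ + N = K₁`, i.e. `N ≤ K₁`,
i.e. `N = K₁`. So `K₁` is an isolated vertex of a graph with at least the two vertices
`K₁ ≠ K₂`, which cannot be connected.
-/

theorem IsAtom.isCoatom_of_sup_eq_top {α : Type*} [Lattice α] [BoundedOrder α]
    [IsModularLattice α] {a b : α} (ha : IsAtom a) (hb : IsAtom b) (hab : a ≠ b)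
    (h : a ⊔ b = ⊤) : IsCoatom a :=
  (IsCompl.of_eq (ha.disjoint_of_ne hb hab).eq_bot h).isCoatom_iff_isAtom.mpr hb

theorem PSS.not_adj_of_isAtom_of_isCoatom {R M : Type*} [CommRing R] [AddCommGroup M]
    [Module R M] {v w : {N : Submodule R M // N ≠ ⊥ ∧ N ≠ ⊤}} (ha : IsAtom v.1)
    (hc : IsCoatom v.1) : ¬ (PSS R M).Adj v w := by
  rintro ⟨hvw, hprime, -⟩
  rcases hc.le_iff.mp (le_sup_left : v.1 ≤ v.1 ⊔ w.1) with htop | hsup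
  · exact hprime htop
  · rcases ha.le_iff.mp (sup_eq_left.mp hsup) with hbot | heq
    · exact w.2.1 hbot
    · exact hvw (Subtype.ext heq.symm)

theorem pss_connected_imp_sup_atoms_ne_top_general
    (R M : Type*) [CommRing R] [AddCommGroup M] [Module R M]
    (hconn : (PSS R M).Connected) :
    ∀ K₁ K₂ : Submodule R M, IsAtom K₁ → IsAtom K₂ → K₁ ⊔ K₂ ≠ ⊤ := by
  intro K₁ K₂ h₁ h₂ hsup
  obtain ⟨v⟩ := hconn.nonempty
  have hne : K₁ ≠ K₂ := by
    rintro rfl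
    rw [sup_idem] at hsup
    exact v.2.1 (h₁.2 _ (hsup ▸ v.2.2.lt_top))
  have hc₁ : IsCoatom K₁ := h₁.isCoatom_of_sup_eq_top h₂ hne hsup
  have hc₂ : IsCoatom K₂ := h₂.isCoatom_of_sup_eq_top h₁ hne.symm (sup_comm K₁ K₂ ▸ hsup)
  let v₁ : {N : Submodule R M // N ≠ ⊥ ∧ N ≠ ⊤} := ⟨K₁, h₁.1, hc₁.1⟩
  let v₂ : {N : Submodule R M // N ≠ ⊥ ∧ N ≠ ⊤} := ⟨K₂, h₂.1, hc₂.1⟩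
  have : Nontrivial {N : Submodule R M // N ≠ ⊥ ∧ N ≠ ⊤} :=
    ⟨v₁, v₂, fun h => hne (congrArg Subtype.val h)⟩
  obtain ⟨w, hw⟩ := hconn.preconnected.exists_adj_of_nontrivial v₁
  exact PSS.not_adj_of_isAtom_of_isCoatom h₁ hc₁ hw

/-- **Corollary 3.10.** If `PSS(M)` is connected, then the sum of any two minimal
submodules of `M` is a proper submodule of `M`. -/
theorem pss_connected_imp_sup_atoms_ne_top
    (R M : Type*) [CommRing R] [AddCommGroup M] [Module R M]
    (hmax : ∀ N : Submodule R M, N ≠ ⊤ → ∃ K : Submodule R M, IsCoatom K ∧ N ≤ K)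
    (hconn : (PSS R M).Connected) :
    ∀ K₁ K₂ : Submodule R M, IsAtom K₁ → IsAtom K₂ → K₁ ⊔ K₂ ≠ ⊤ :=
  pss_connected_imp_sup_atoms_ne_top_general R M hconn
end

section
/- Let R be a commutative ring with identity and M an R-module such that the girth of the graph PSS(M) is a finite number n. Then M has at least ⌊n/2⌋ distinct prime submodules. -/
open Submodule

/-!
If an edge `N — K` of `PSS(M)` has `N + K` different from both `N` and `K`, then `N`, `K`,
`N + K` is a triangle, so the girth is `3`. Otherwise `N + K ∈ {N, K}` for every edge, so the
prime vertices form a vertex cover of `PSS(M)`; and a vertex cover meets each of the `⌊n/2⌋`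
pairwise disjoint edges `v₀v₁, v₂v₃, …` of a shortest cycle `v₀v₁⋯vₙ₋₁` in distinct vertices.
-/

namespace SimpleGraph

variable {V : Type*} {G : SimpleGraph V}

lemma egirth_le_three {a b c : V} (hab : G.Adj a b) (hbc : G.Adj b c) (hca : G.Adj c a) :
    G.egirth ≤ 3 := by
  classical
  obtain ⟨u, w, hw, hlen⟩ := is3Clique_iff_exists_cycle_length_three.mp
    ⟨{a, b, c}, is3Clique_triple_iff.mpr ⟨hab, hca.symm, hbc⟩⟩
  simpa [hlen] using egirth_le_length hw

lemma IsVertexCover.length_div_two_le_encard {c : Set V} (hc : G.IsVertexCover c) {u : V}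
    {w : G.Walk u u} (hw : w.IsCycle) : (w.length / 2 : ℕ) ≤ c.encard := by
  have hcovered : ∀ j < w.length / 2, ∃ i, i / 2 = j ∧ i ≤ w.length - 1 ∧ w.getVert i ∈ c := by
    intro j hj
    rcases hc (w.adj_getVert_succ (i := 2 * j) (by omega)) with h | h
    exacts [⟨2 * j, by omega, by omega, h⟩, ⟨2 * j + 1, by omega, by omega, h⟩]
  choose! idx hidx using hcovered
  calc ((w.length / 2 : ℕ) : ℕ∞) = (Set.Iio (w.length / 2)).encard := by
        rw [← Finset.coe_range, Set.encard_coe_eq_coe_finsetCard, Finset.card_range]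
    _ ≤ c.encard := Set.encard_le_encard_of_injOn (f := fun j => w.getVert (idx j))
        (fun j hj => (hidx j hj).2.2) fun j hj j' hj' h => by
          rw [← (hidx j hj).1, ← (hidx j' hj').1,
            hw.getVert_injOn' (hidx j hj).2.1 (hidx j' hj').2.1 h]

end SimpleGraph

namespace PSS

open SimpleGraph

variable {R M : Type*} [CommRing R] [AddCommGroup M] [Module R M]

lemma egirth_le_three_of_adj {N K : {N : Submodule R M // N ≠ ⊥ ∧ N ≠ ⊤}}
    (h : (PSS R M).Adj N K) (hN : N.1 ⊔ K.1 ≠ N.1) (hK : N.1 ⊔ K.1 ≠ K.1) :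
    (PSS R M).egirth ≤ 3 := by
  let S : {N : Submodule R M // N ≠ ⊥ ∧ N ≠ ⊤} :=
    ⟨N.1 ⊔ K.1, ne_bot_of_le_ne_bot N.2.1 le_sup_left, h.2.1⟩
  have hKS : (PSS R M).Adj K S :=
    ⟨fun e => hK (congrArg Subtype.val e).symm, by simpa [S] using h.2⟩
  have hSN : (PSS R M).Adj S N :=
    ⟨fun e => hN (congrArg Subtype.val e), by simpa [S] using h.2⟩
  exact egirth_le_three h hKS hSN

lemma isVertexCover_isPrimeSubmodule (hg : 3 < (PSS R M).egirth) :
    (PSS R M).IsVertexCover {N | IsPrimeSubmodule R N.1} := by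
  intro N K h
  by_cases hN : N.1 ⊔ K.1 = N.1
  · exact .inl (show IsPrimeSubmodule R N.1 from hN ▸ h.2)
  by_cases hK : N.1 ⊔ K.1 = K.1
  · exact .inr (show IsPrimeSubmodule R K.1 from hK ▸ h.2)
  exact absurd (egirth_le_three_of_adj h hN hK) (not_le.mpr hg)

end PSS

/-- **Theorem 3.12.** If the girth of `PSS(M)` is a finite number `n`, then `M` has at
least `⌊n/2⌋` distinct prime submodules. -/
theorem pss_girth_imp_many_prime_submodules
    (R M : Type*) [CommRing R] [AddCommGroup M] [Module R M]
    (n : ℕ) (hg : (PSS R M).egirth = n) :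
    (↑(n / 2) : ℕ∞) ≤ {P : Submodule R M | IsPrimeSubmodule R P}.encard := by
  have hcyclic : ¬ (PSS R M).IsAcyclic := by
    rw [← SimpleGraph.egirth_eq_top, hg]
    exact ENat.natCast_ne_top n
  obtain ⟨N, w, hw, hlen⟩ := SimpleGraph.exists_egirth_eq_length.mpr hcyclic
  have hwn : w.length = n := by exact_mod_cast hlen.symm.trans hg
  rcases le_or_gt n 3 with hn | hn
  · have hadj := w.adj_getVert_succ (i := 0) (by have := hw.three_le_length; omega)
    calc ((n / 2 : ℕ) : ℕ∞) ≤ 1 := by exact_mod_cast (by omega : n / 2 ≤ 1)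
      _ ≤ _ := by exact Set.one_le_encard_iff_nonempty.mpr ⟨_, hadj.2⟩
  · have hcover := PSS.isVertexCover_isPrimeSubmodule (by rw [hg]; exact_mod_cast hn)
    calc ((n / 2 : ℕ) : ℕ∞) ≤ {N : {N : Submodule R M // N ≠ ⊥ ∧ N ≠ ⊤} |
          IsPrimeSubmodule R N.1}.encard := hwn ▸ hcover.length_div_two_le_encard hw
      _ ≤ _ := Set.encard_le_encard_of_injOn (f := Subtype.val) (fun _ hN => hN)
          Subtype.val_injective.injOn
end
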